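/- For $n \geq 1$, the group $W_{2n+2}$ is generated by two elements: the transposition $(1\ 3)$ and the $(2n+2)$-cycle $r_1 = (1\ 2\ 3\ \cdots\ 2n+2)$. -/

import Mathlib

/-- Indices `0,…,2n+1` of `Fin (2n+2)` correspond to the numbers `1,…,2n+2`;
`Bo` is the set corresponding to the odd numbers `1,3,…,2n+1`. -/
def Bo (n : ℕ) : Set (Fin (2*n+2)) := {x | (x : ℕ) % 2 = 0}

/-- `Be` is the set corresponding to the even numbers `2,4,…,2n+2`. -/
def Be (n : ℕ) : Set (Fin (2*n+2)) := {x | (x : ℕ) % 2 = 1}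

/-!
Conjugating `(1 3)` by the powers of the rotation `r₁` gives every transposition `(i, i+2)`. These
generate all parity-preserving permutations, because such a permutation moves each point within
its orbit under the transpositions `(i, i+2)`, i.e. among the points of the same parity. A
permutation exchanging odd and even points becomes parity-preserving after composing with `r₁⁻¹`.
-/

open Equiv Equiv.Perm MulAction Subgroup

theorem Equiv.image_eq_iff_forall_apply_mem_iff {α β : Type*} (e : α ≃ β) (s : Set α)
    (t : Set β) : e '' s = t ↔ ∀ x, e x ∈ t ↔ x ∈ s := by
  rw [eq_comm, ← e.preimage_eq_iff_eq_image, Set.ext_iff]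
  rfl

namespace Fin

variable {N : ℕ}

theorem val_add_mod_two (hN : 2 ∣ N) (a b : Fin N) :
    (a + b : Fin N).val % 2 = (a.val + b.val) % 2 := by
  rw [Fin.val_add, Nat.mod_mod_of_dvd _ hN]

theorem val_two_of_lt [NeZero N] (hN : 2 < N) : ((2 : Fin N) : ℕ) = 2 := by
  simp [Nat.mod_eq_of_lt hN]

end Fin

section StepTwoSwaps

variable {N : ℕ} [NeZero N]

def stepTwoSwaps (N : ℕ) [NeZero N] : Set (Perm (Fin N)) :=
  Set.range fun k : Fin N => swap k (k + 2)

theorem isSwap_of_mem_stepTwoSwaps (hN : 2 < N) {σ : Perm (Fin N)} (hσ : σ ∈ stepTwoSwaps N) :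
    σ.IsSwap := by
  obtain ⟨k, rfl⟩ := hσ
  refine ⟨k, k + 2, fun h => ?_, rfl⟩
  have := congrArg Fin.val (add_eq_left.mp h.symm)
  rw [Fin.val_two_of_lt hN, Fin.val_zero] at this
  omega

theorem swap_add_two_mem_closure_swap_finRotate (m : ℕ) (hm : m < N) :
    swap ⟨m, hm⟩ (⟨m, hm⟩ + 2) ∈ closure {swap 0 2, finRotate N} := by
  induction m with
  | zero => exact subset_closure (by simp)
  | succ m ih =>
    have hr : finRotate N ∈ closure {swap 0 2, finRotate N} := subset_closure (by simp)
    have hsucc : (⟨m + 1, hm⟩ : Fin N) = ⟨m, by omega⟩ + 1 := by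
      rw [Fin.ext_iff, Fin.val_add_one_of_lt' (by simpa using hm)]
    have hconj := swap_apply_apply (finRotate N) ⟨m, by omega⟩ (⟨m, by omega⟩ + 2)
    rw [finRotate_apply, finRotate_apply, add_right_comm, ← hsucc] at hconj
    rw [hconj]
    exact mul_mem (mul_mem hr (ih _)) (inv_mem hr)

theorem closure_stepTwoSwaps_le :
    closure (stepTwoSwaps N) ≤ closure {swap 0 2, finRotate N} := by
  rw [closure_le]
  rintro _ ⟨k, rfl⟩
  exact swap_add_two_mem_closure_swap_finRotate k.val k.isLt

theorem mem_orbit_closure_stepTwoSwaps (hN : 2 < N) (y : Fin N) :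
    y ∈ orbit (closure (stepTwoSwaps N)) ⟨y.val % 2, by omega⟩ := by
  obtain ⟨m, hm⟩ := y
  induction m using Nat.strong_induction_on with
  | _ m ih =>
  rcases Nat.lt_or_ge m 2 with hm2 | hm2
  · simp [Nat.mod_eq_of_lt hm2]
  obtain ⟨k, rfl⟩ : ∃ k, m = k + 2 := ⟨m - 2, by omega⟩
  have hk : (⟨k, by omega⟩ + 2 : Fin N) = ⟨k + 2, hm⟩ := by
    rw [Fin.ext_iff, Fin.val_add_eq_of_add_lt] <;> rw [Fin.val_two_of_lt hN]
    omega
  have hswap : swap (⟨k, by omega⟩ : Fin N) (⟨k, by omega⟩ + 2) ∈ closure (stepTwoSwaps N) :=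
    subset_closure ⟨_, rfl⟩
  have := mem_orbit_of_mem_orbit (⟨_, hswap⟩ : closure (stepTwoSwaps N)) (ih k (by omega) (by omega))
  simpa [hk] using this

theorem mem_closure_stepTwoSwaps_of_parity (hN : 2 < N) {σ : Perm (Fin N)}
    (hσ : ∀ x, (σ x).val % 2 = x.val % 2) : σ ∈ closure (stepTwoSwaps N) := by
  -- A group generated by transpositions contains every permutation moving points within orbits.
  refine (mem_closure_isSwap fun _ => isSwap_of_mem_stepTwoSwaps hN).2
    ⟨Set.toFinite _, fun x => ?_⟩
  rw [orbit_eq_iff.2 (mem_orbit_closure_stepTwoSwaps hN x)]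
  simpa [hσ x] using mem_orbit_closure_stepTwoSwaps hN (σ x)

theorem val_finRotate_mod_two (hN : 2 ∣ N) (x : Fin N) :
    (finRotate N x).val % 2 = (x.val + 1) % 2 := by
  have : 1 < N := by have := NeZero.pos N; omega
  rw [finRotate_apply, Fin.val_add_mod_two hN, Fin.val_one', Nat.mod_eq_of_lt this]

theorem mem_closure_swap_finRotate_of_parity_flip (hN2 : 2 < N) (hN : 2 ∣ N)
    {σ : Perm (Fin N)} (hσ : ∀ x, (σ x).val % 2 ≠ x.val % 2) :
    σ ∈ closure {swap 0 2, finRotate N} := by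
  have hr : finRotate N ∈ closure {swap 0 2, finRotate N} := subset_closure (by simp)
  suffices (finRotate N)⁻¹ * σ ∈ closure {swap 0 2, finRotate N} by
    simpa using mul_mem hr this
  refine closure_stepTwoSwaps_le (mem_closure_stepTwoSwaps_of_parity hN2 fun x => ?_)
  have hrot := val_finRotate_mod_two hN (((finRotate N)⁻¹ * σ) x)
  rw [← Perm.mul_apply, mul_inv_cancel_left] at hrot
  have := hσ x
  omega

end StepTwoSwaps

theorem image_Bo_eq_Bo_iff {n : ℕ} (σ : Perm (Fin (2 * n + 2))) :
    σ '' Bo n = Bo n ↔ ∀ x, (σ x).val % 2 = x.val % 2 := by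
  simp only [Equiv.image_eq_iff_forall_apply_mem_iff, Bo, Set.mem_ofPred_eq]
  refine forall_congr' fun x => ?_
  omega

theorem image_Bo_eq_Be_iff {n : ℕ} (σ : Perm (Fin (2 * n + 2))) :
    σ '' Bo n = Be n ↔ ∀ x, (σ x).val % 2 ≠ x.val % 2 := by
  simp only [Equiv.image_eq_iff_forall_apply_mem_iff, Bo, Be, Set.mem_ofPred_eq]
  refine forall_congr' fun x => ?_
  omega

theorem stmt9 (n : ℕ) (hn : 1 ≤ n)
    (W : Subgroup (Equiv.Perm (Fin (2*n+2))))
    (hW : ∀ σ, σ ∈ W ↔ (⇑σ '' Bo n = Bo n ∨ ⇑σ '' Bo n = Be n)) :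
    W = Subgroup.closure
      {Equiv.swap (⟨0, by omega⟩ : Fin (2*n+2)) ⟨2, by omega⟩, finRotate (2*n+2)} := by
  have hN2 : 2 < 2 * n + 2 := by omega
  have hN : 2 ∣ 2 * n + 2 := ⟨n + 1, by ring⟩
  have h2 : (⟨2, hN2⟩ : Fin (2 * n + 2)) = 2 := Fin.ext (Nat.mod_eq_of_lt hN2).symm
  rw [Fin.mk_zero, h2]
  apply le_antisymm
  · intro σ hσ
    rcases (hW σ).1 hσ with h | h
    · exact closure_stepTwoSwaps_le
        (mem_closure_stepTwoSwaps_of_parity hN2 ((image_Bo_eq_Bo_iff σ).1 h))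
    · exact mem_closure_swap_finRotate_of_parity_flip hN2 hN ((image_Bo_eq_Be_iff σ).1 h)
  · rw [closure_le]
    rintro _ (rfl | rfl)
    · refine (hW _).2 (Or.inl ((image_Bo_eq_Bo_iff _).2 fun x => ?_))
      exact apply_swap_eq_self (v := fun x : Fin _ => x.val % 2)
        (by simp) x
    · refine (hW _).2 (Or.inr ((image_Bo_eq_Be_iff _).2 fun x => ?_))
      rw [val_finRotate_mod_two hN]
      omega
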